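/- arXiv:2604.21834 — 3 statements merged into one kernel-verified Lean document; each statement's English description precedes it below -/
import Mathlib

section
/- Let s ≥ 3 be an integer, let V = 𝔽₂^s ∖ {0}, and call a 3-element subset {x, y, z} of V a block if z = x + y. Let c be an edge-coloring of the complete 3-uniform hypergraph on V such that: (i) each block receives a color that is used on no other triple; (ii) for every non-block triple T, c(T) is not a color of any block, and any two non-block triples with the same linear span in 𝔽₂^s receive the same color; and (iii) whenever W1, W2, W3 are distinct 3-dimensional linear subspaces of 𝔽₂^s that pairwise intersect in 2-dimensional subspaces and whose common intersection W1 ∩ W2 ∩ W3 is 1-dimensional, the colors assigned to non-block triples spanning W1, W2, W3 respectively are not pairwise distinct. Then c is rainbow F4-free. -/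
/-- A block in `𝔽₂^s ∖ {0}`: a triple `{x, y, x + y}` with `x, y` distinct and
nonzero (a projective line of `PG(s-1, 2)`). -/
def IsBlock (s : ℕ) (T : Finset (Fin s → ZMod 2)) : Prop :=
  ∃ x y : Fin s → ZMod 2, x ≠ 0 ∧ y ≠ 0 ∧ x ≠ y ∧ T = {x, y, x + y}

/-- A triple of nonzero vectors of `𝔽₂^s`. -/
def IsTriple (s : ℕ) (T : Finset (Fin s → ZMod 2)) : Prop :=
  T.card = 3 ∧ (0 : Fin s → ZMod 2) ∉ T

section Aux

open Submodule Module

variable {s : ℕ}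

private lemma z2cases : ∀ u : ZMod 2, u = 0 ∨ u = 1 := by decide

private lemma vadd_self (x : Fin s → ZMod 2) : x + x = 0 := by
  funext i
  show x i + x i = 0
  have : ∀ u : ZMod 2, u + u = 0 := by decide
  exact this _

private lemma vcancel (x y : Fin s → ZMod 2) : x + (x + y) = y := by
  rw [← add_assoc, vadd_self, zero_add]

private lemma vaddeq (x y : Fin s → ZMod 2) (h : x + y = 0) : x = y := by
  have := vcancel x y; rw [h, add_zero] at this; exact this

private lemma vthird (x y z : Fin s → ZMod 2) (h : x + y + z = 0) : z = x + y := by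
  have h1 := vcancel (x + y) z
  rw [h, add_zero] at h1; exact h1.symm

private lemma li2 (a b : Fin s → ZMod 2) (ha : a ≠ 0) (hb : b ≠ 0) (hab : a ≠ b) :
    LinearIndependent (ZMod 2) ![a, b] := by
  rw [Fintype.linearIndependent_iff]
  intro g hg
  simp only [Fin.sum_univ_two, Matrix.cons_val_zero, Matrix.cons_val_one, Matrix.head_cons] at hg
  have hi : ∀ i, g i = 0 := by
    rcases z2cases (g 0) with h0 | h0 <;> rcases z2cases (g 1) with h1 | h1 <;>
      rw [h0, h1] at hg <;>
      simp only [zero_smul, one_smul, zero_add, add_zero] at hg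
    · intro i; fin_cases i <;> assumption
    · exact absurd hg hb
    · exact absurd hg ha
    · exact absurd (vaddeq _ _ hg) hab
  exact hi

private lemma range_pair (a b : Fin s → ZMod 2) : Set.range ![a, b] = {a, b} := by
  ext x
  simp [Fin.exists_fin_two, eq_comm, or_comm]

private lemma finrank_span_pair (a b : Fin s → ZMod 2) (ha : a ≠ 0) (hb : b ≠ 0) (hab : a ≠ b) :
    finrank (ZMod 2) (span (ZMod 2) ({a, b} : Set (Fin s → ZMod 2))) = 2 := by
  have h := finrank_span_eq_card (li2 a b ha hb hab)
  rwa [range_pair, Fintype.card_fin] at h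

private lemma li3 (a b c : Fin s → ZMod 2) (ha : a ≠ 0) (hb : b ≠ 0) (hc : c ≠ 0)
    (hab : a ≠ b) (hac : a ≠ c) (hbc : b ≠ c) (habc : a + b + c ≠ 0) :
    LinearIndependent (ZMod 2) ![a, b, c] := by
  rw [Fintype.linearIndependent_iff]
  intro g hg
  simp only [Fin.sum_univ_three, Matrix.cons_val_zero, Matrix.cons_val_one, Matrix.head_cons,
    Matrix.cons_val_two, Matrix.tail_cons] at hg
  have hi : ∀ i, g i = 0 := by
    rcases z2cases (g 0) with h0 | h0 <;> rcases z2cases (g 1) with h1 | h1 <;>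
        rcases z2cases (g 2) with h2 | h2 <;>
      rw [h0, h1, h2] at hg <;>
      simp only [zero_smul, one_smul, zero_add, add_zero] at hg
    · intro i; fin_cases i <;> assumption
    · exact absurd hg hc
    · exact absurd hg hb
    · exact absurd (vaddeq _ _ hg) hbc
    · exact absurd hg ha
    · exact absurd (vaddeq _ _ hg) hac
    · exact absurd (vaddeq _ _ hg) hab
    · exact absurd hg habc
  exact hi

private lemma range_triple (a b c : Fin s → ZMod 2) : Set.range ![a, b, c] = {a, b, c} := by
  ext x
  constructor
  · rintro ⟨i, rfl⟩; fin_cases i <;> simp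
  · rintro (rfl | rfl | rfl)
    exacts [⟨0, rfl⟩, ⟨1, rfl⟩, ⟨2, rfl⟩]

private lemma finrank_span_triple (a b c : Fin s → ZMod 2) (ha : a ≠ 0) (hb : b ≠ 0) (hc : c ≠ 0)
    (hab : a ≠ b) (hac : a ≠ c) (hbc : b ≠ c) (habc : a + b + c ≠ 0) :
    finrank (ZMod 2) (span (ZMod 2) ({a, b, c} : Set (Fin s → ZMod 2))) = 3 := by
  have h := finrank_span_eq_card (li3 a b c ha hb hc hab hac hbc habc)
  rwa [range_triple, Fintype.card_fin] at h

private lemma sum3 (a b c : Fin s → ZMod 2) (hab : a ≠ b) (hac : a ≠ c) (hbc : b ≠ c) :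
    ∑ x ∈ ({a, b, c} : Finset (Fin s → ZMod 2)), x = a + b + c := by
  rw [Finset.sum_insert (by simp [hab, hac]), Finset.sum_insert (by simp [hbc]),
    Finset.sum_singleton, ← add_assoc]

private lemma isTriple_mk (a b c : Fin s → ZMod 2) (ha : a ≠ 0) (hb : b ≠ 0) (hc : c ≠ 0)
    (hab : a ≠ b) (hac : a ≠ c) (hbc : b ≠ c) : IsTriple s {a, b, c} := by
  constructor
  · rw [Finset.card_eq_three]; exact ⟨a, b, c, hab, hac, hbc, rfl⟩
  · simp only [Finset.mem_insert, Finset.mem_singleton]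
    push_neg
    exact ⟨ha.symm, hb.symm, hc.symm⟩

private lemma block_sum {T : Finset (Fin s → ZMod 2)} (h : IsBlock s T) : ∑ x ∈ T, x = 0 := by
  obtain ⟨x, y, hx, hy, hxy, rfl⟩ := h
  have h1 : x ≠ x + y := by
    intro he
    exact hy (add_left_cancel (a := x) (by rw [add_zero]; exact he)).symm
  have h2 : y ≠ x + y := by
    intro he
    exact hx (add_right_cancel (b := y) (by rw [zero_add]; exact he.symm))
  rw [sum3 x y (x + y) hxy h1 h2]
  exact vadd_self (x + y)

private lemma block_iff (a b c : Fin s → ZMod 2) (ha : a ≠ 0) (hb : b ≠ 0)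
    (hab : a ≠ b) (hac : a ≠ c) (hbc : b ≠ c) :
    IsBlock s {a, b, c} ↔ a + b + c = 0 := by
  constructor
  · intro h
    have := block_sum h
    rwa [sum3 a b c hab hac hbc] at this
  · intro h
    exact ⟨a, b, ha, hb, hab, by rw [← vthird a b c h]⟩

private lemma mem3₁ (x y z : Fin s → ZMod 2) :
    x ∈ span (ZMod 2) ({x, y, z} : Set (Fin s → ZMod 2)) := subset_span (by simp)

private lemma mem3₂ (x y z : Fin s → ZMod 2) :
    y ∈ span (ZMod 2) ({x, y, z} : Set (Fin s → ZMod 2)) := subset_span (by simp)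

private lemma mem3₃ (x y z : Fin s → ZMod 2) :
    z ∈ span (ZMod 2) ({x, y, z} : Set (Fin s → ZMod 2)) := subset_span (by simp)

private lemma span3_le {x y z : Fin s → ZMod 2} {W : Submodule (ZMod 2) (Fin s → ZMod 2)}
    (hx : x ∈ W) (hy : y ∈ W) (hz : z ∈ W) :
    span (ZMod 2) ({x, y, z} : Set (Fin s → ZMod 2)) ≤ W := by
  rw [span_le]
  rintro w hw
  simp only [Set.mem_insert_iff, Set.mem_singleton_iff] at hw
  rcases hw with rfl | rfl | rfl <;> assumption

private lemma span2_le {x y : Fin s → ZMod 2} {W : Submodule (ZMod 2) (Fin s → ZMod 2)}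
    (hx : x ∈ W) (hy : y ∈ W) :
    span (ZMod 2) ({x, y} : Set (Fin s → ZMod 2)) ≤ W := by
  rw [span_le]
  rintro w hw
  simp only [Set.mem_insert_iff, Set.mem_singleton_iff] at hw
  rcases hw with rfl | rfl <;> assumption

end Aux

section Aux2
open Submodule Module

set_option maxHeartbeats 1000000 in
private lemma dims_bundle {s : ℕ} (a b c d : Fin s → ZMod 2)
    (ha : a ≠ 0) (hb : b ≠ 0) (hc : c ≠ 0) (hd : d ≠ 0)
    (hab : a ≠ b) (hac : a ≠ c) (had : a ≠ d) (hbc : b ≠ c) (hbd : b ≠ d) (hcd : c ≠ d)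
    (habc : a + b + c ≠ 0) (habd : a + b + d ≠ 0) (hbcd : b + c + d ≠ 0)
    (hW12 : span (ZMod 2) ({a, b, c} : Set (Fin s → ZMod 2)) ≠
      span (ZMod 2) ({a, b, d} : Set (Fin s → ZMod 2))) :
    finrank (ZMod 2) ↥(span (ZMod 2) ({a, b, c} : Set (Fin s → ZMod 2)) ⊓
      span (ZMod 2) ({a, b, d} : Set (Fin s → ZMod 2))) = 2 ∧
    finrank (ZMod 2) ↥(span (ZMod 2) ({a, b, c} : Set (Fin s → ZMod 2)) ⊓
      span (ZMod 2) ({b, c, d} : Set (Fin s → ZMod 2))) = 2 ∧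
    finrank (ZMod 2) ↥(span (ZMod 2) ({a, b, d} : Set (Fin s → ZMod 2)) ⊓
      span (ZMod 2) ({b, c, d} : Set (Fin s → ZMod 2))) = 2 ∧
    finrank (ZMod 2) ↥(span (ZMod 2) ({a, b, c} : Set (Fin s → ZMod 2)) ⊓
      span (ZMod 2) ({a, b, d} : Set (Fin s → ZMod 2)) ⊓
      span (ZMod 2) ({b, c, d} : Set (Fin s → ZMod 2))) = 1 := by
  have r1 := finrank_span_triple a b c ha hb hc hab hac hbc habc
  have r2 := finrank_span_triple a b d ha hb hd hab had hbd habd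
  have r3 := finrank_span_triple b c d hb hc hd hbc hbd hcd hbcd
  have hdW1 : d ∉ span (ZMod 2) ({a, b, c} : Set (Fin s → ZMod 2)) := by
    intro hdm
    apply hW12
    refine (Submodule.eq_of_le_of_finrank_le
      (span3_le (mem3₁ a b c) (mem3₂ a b c) hdm) ?_).symm
    exact le_of_eq (r1.trans r2.symm)
  -- finrank of span {a, b, c, d} is 4
  have hinf_bot : span (ZMod 2) ({a, b, c} : Set (Fin s → ZMod 2)) ⊓
      span (ZMod 2) ({d} : Set (Fin s → ZMod 2)) = ⊥ := by
    rw [eq_bot_iff]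
    intro x hx
    rw [Submodule.mem_inf] at hx
    obtain ⟨hx1, hx2⟩ := hx
    rcases Submodule.mem_span_singleton.1 hx2 with ⟨t, ht⟩
    rcases z2cases t with h | h <;> rw [h] at ht
    · rw [← ht, zero_smul]; exact zero_mem ⊥
    · rw [one_smul] at ht
      exact absurd (ht ▸ hx1) hdW1
  have hU : finrank (ZMod 2) (span (ZMod 2) ({a, b, c, d} : Set (Fin s → ZMod 2))) = 4 := by
    have hset : ({a, b, c, d} : Set (Fin s → ZMod 2)) = {a, b, c} ∪ {d} := by
      ext x; simp only [Set.mem_insert_iff, Set.mem_singleton_iff, Set.mem_union]; tauto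
    have hsum := Submodule.finrank_sup_add_finrank_inf_eq
      (span (ZMod 2) ({a, b, c} : Set (Fin s → ZMod 2)))
      (span (ZMod 2) ({d} : Set (Fin s → ZMod 2)))
    rw [hinf_bot, finrank_bot, r1, finrank_span_singleton hd] at hsum
    rw [hset, span_union]
    omega
  have hsup12 : span (ZMod 2) ({a, b, c} : Set (Fin s → ZMod 2)) ⊔
      span (ZMod 2) ({a, b, d} : Set (Fin s → ZMod 2)) =
      span (ZMod 2) ({a, b, c, d} : Set (Fin s → ZMod 2)) := by
    rw [← span_union]; congr 1; ext x; simp; tauto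
  have hsup13 : span (ZMod 2) ({a, b, c} : Set (Fin s → ZMod 2)) ⊔
      span (ZMod 2) ({b, c, d} : Set (Fin s → ZMod 2)) =
      span (ZMod 2) ({a, b, c, d} : Set (Fin s → ZMod 2)) := by
    rw [← span_union]; congr 1; ext x; simp; tauto
  have hsup23 : span (ZMod 2) ({a, b, d} : Set (Fin s → ZMod 2)) ⊔
      span (ZMod 2) ({b, c, d} : Set (Fin s → ZMod 2)) =
      span (ZMod 2) ({a, b, c, d} : Set (Fin s → ZMod 2)) := by
    rw [← span_union]; congr 1; ext x; simp; tauto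
  have r12 : finrank (ZMod 2) ↥(span (ZMod 2) ({a, b, c} : Set (Fin s → ZMod 2)) ⊓
      span (ZMod 2) ({a, b, d} : Set (Fin s → ZMod 2))) = 2 := by
    have h := Submodule.finrank_sup_add_finrank_inf_eq
      (span (ZMod 2) ({a, b, c} : Set (Fin s → ZMod 2)))
      (span (ZMod 2) ({a, b, d} : Set (Fin s → ZMod 2)))
    rw [hsup12, hU, r1, r2] at h
    omega
  have r13 : finrank (ZMod 2) ↥(span (ZMod 2) ({a, b, c} : Set (Fin s → ZMod 2)) ⊓
      span (ZMod 2) ({b, c, d} : Set (Fin s → ZMod 2))) = 2 := by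
    have h := Submodule.finrank_sup_add_finrank_inf_eq
      (span (ZMod 2) ({a, b, c} : Set (Fin s → ZMod 2)))
      (span (ZMod 2) ({b, c, d} : Set (Fin s → ZMod 2)))
    rw [hsup13, hU, r1, r3] at h
    omega
  have r23 : finrank (ZMod 2) ↥(span (ZMod 2) ({a, b, d} : Set (Fin s → ZMod 2)) ⊓
      span (ZMod 2) ({b, c, d} : Set (Fin s → ZMod 2))) = 2 := by
    have h := Submodule.finrank_sup_add_finrank_inf_eq
      (span (ZMod 2) ({a, b, d} : Set (Fin s → ZMod 2)))
      (span (ZMod 2) ({b, c, d} : Set (Fin s → ZMod 2)))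
    rw [hsup23, hU, r2, r3] at h
    omega
  -- the triple intersection has dimension 1
  have hbI : b ∈ span (ZMod 2) ({a, b, c} : Set (Fin s → ZMod 2)) ⊓
      span (ZMod 2) ({a, b, d} : Set (Fin s → ZMod 2)) ⊓
      span (ZMod 2) ({b, c, d} : Set (Fin s → ZMod 2)) :=
    Submodule.mem_inf.2 ⟨Submodule.mem_inf.2 ⟨mem3₂ a b c, mem3₂ a b d⟩, mem3₁ b c d⟩
  have hlow : 1 ≤ finrank (ZMod 2) ↥(span (ZMod 2) ({a, b, c} : Set (Fin s → ZMod 2)) ⊓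
      span (ZMod 2) ({a, b, d} : Set (Fin s → ZMod 2)) ⊓
      span (ZMod 2) ({b, c, d} : Set (Fin s → ZMod 2))) := by
    have h1 : span (ZMod 2) ({b} : Set (Fin s → ZMod 2)) ≤ _ :=
      (span_le.2 (Set.singleton_subset_iff.2 hbI))
    have := Submodule.finrank_mono h1
    rwa [finrank_span_singleton hb] at this
  have hup : finrank (ZMod 2) ↥(span (ZMod 2) ({a, b, c} : Set (Fin s → ZMod 2)) ⊓
      span (ZMod 2) ({a, b, d} : Set (Fin s → ZMod 2)) ⊓
      span (ZMod 2) ({b, c, d} : Set (Fin s → ZMod 2))) ≤ 2 := by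
    have := Submodule.finrank_mono (inf_le_left (a := span (ZMod 2)
      ({a, b, c} : Set (Fin s → ZMod 2)) ⊓ span (ZMod 2) ({a, b, d} : Set (Fin s → ZMod 2)))
      (b := span (ZMod 2) ({b, c, d} : Set (Fin s → ZMod 2))))
    rwa [r12] at this
  have hne2 : finrank (ZMod 2) ↥(span (ZMod 2) ({a, b, c} : Set (Fin s → ZMod 2)) ⊓
      span (ZMod 2) ({a, b, d} : Set (Fin s → ZMod 2)) ⊓
      span (ZMod 2) ({b, c, d} : Set (Fin s → ZMod 2))) ≠ 2 := by
    intro h2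
    have heq' := Submodule.eq_of_le_of_finrank_le
      (inf_le_left (a := span (ZMod 2) ({a, b, c} : Set (Fin s → ZMod 2)) ⊓
        span (ZMod 2) ({a, b, d} : Set (Fin s → ZMod 2)))
        (b := span (ZMod 2) ({b, c, d} : Set (Fin s → ZMod 2))))
      (le_of_eq (r12.trans h2.symm))
    have haW3 : a ∈ span (ZMod 2) ({b, c, d} : Set (Fin s → ZMod 2)) := by
      have haI : a ∈ span (ZMod 2) ({a, b, c} : Set (Fin s → ZMod 2)) ⊓
          span (ZMod 2) ({a, b, d} : Set (Fin s → ZMod 2)) :=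
        Submodule.mem_inf.2 ⟨mem3₁ a b c, mem3₁ a b d⟩
      rw [← heq'] at haI
      exact (Submodule.mem_inf.1 haI).2
    have heq2 : span (ZMod 2) ({b, c} : Set (Fin s → ZMod 2)) =
        span (ZMod 2) ({a, b, c} : Set (Fin s → ZMod 2)) ⊓
        span (ZMod 2) ({b, c, d} : Set (Fin s → ZMod 2)) := by
      refine Submodule.eq_of_le_of_finrank_le
        (le_inf (span2_le (mem3₂ a b c) (mem3₃ a b c)) (span2_le (mem3₁ b c d) (mem3₂ b c d)))
        (le_of_eq (r13.trans (finrank_span_pair b c hb hc hbc).symm))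
    have haBC : a ∈ span (ZMod 2) ({b, c} : Set (Fin s → ZMod 2)) := by
      rw [heq2]
      exact Submodule.mem_inf.2 ⟨mem3₁ a b c, haW3⟩
    rcases Submodule.mem_span_pair.1 haBC with ⟨u, t, hut⟩
    rcases z2cases u with hu | hu <;> rcases z2cases t with ht | ht <;> rw [hu, ht] at hut <;>
      simp only [zero_smul, one_smul, zero_add, add_zero] at hut
    · exact ha hut.symm
    · exact hac hut.symm
    · exact hab hut.symm
    · apply habc
      rw [← hut, add_right_comm (b + c) b c, add_assoc b c c, vadd_self, add_zero, vadd_self]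
  have r123 : finrank (ZMod 2) ↥(span (ZMod 2) ({a, b, c} : Set (Fin s → ZMod 2)) ⊓
      span (ZMod 2) ({a, b, d} : Set (Fin s → ZMod 2)) ⊓
      span (ZMod 2) ({b, c, d} : Set (Fin s → ZMod 2))) = 1 := by omega
  exact ⟨r12, r13, r23, r123⟩

end Aux2

open Submodule Module

/-- The projective-geometric coloring is rainbow `F4`-free: if each block gets a
color used on no other triple, non-block triples with equal linear spans get
equal (non-block) colors, and no point-type triangle of 3-dimensional subspaces
carries three pairwise distinct colors, then the coloring of the complete
3-graph on `𝔽₂^s ∖ {0}` contains no rainbow `F4`. -/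
theorem projective_coloring_rainbowF4Free (s : ℕ) (hs : 3 ≤ s)
    (col : Finset (Fin s → ZMod 2) → ℕ)
    (hblock : ∀ T : Finset (Fin s → ZMod 2), IsTriple s T → IsBlock s T →
      ∀ T' : Finset (Fin s → ZMod 2), IsTriple s T' → T' ≠ T → col T' ≠ col T)
    (hnonblock_ne : ∀ T : Finset (Fin s → ZMod 2), IsTriple s T → ¬ IsBlock s T →
      ∀ T' : Finset (Fin s → ZMod 2), IsTriple s T' → IsBlock s T' → col T ≠ col T')
    (hspan : ∀ T1 T2 : Finset (Fin s → ZMod 2),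
      IsTriple s T1 → ¬ IsBlock s T1 → IsTriple s T2 → ¬ IsBlock s T2 →
      Submodule.span (ZMod 2) (T1 : Set (Fin s → ZMod 2)) =
        Submodule.span (ZMod 2) (T2 : Set (Fin s → ZMod 2)) →
      col T1 = col T2)
    (hgood : ∀ W1 W2 W3 : Submodule (ZMod 2) (Fin s → ZMod 2),
      W1 ≠ W2 → W1 ≠ W3 → W2 ≠ W3 →
      Module.finrank (ZMod 2) W1 = 3 →
      Module.finrank (ZMod 2) W2 = 3 →
      Module.finrank (ZMod 2) W3 = 3 →
      Module.finrank (ZMod 2) ↥(W1 ⊓ W2) = 2 →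
      Module.finrank (ZMod 2) ↥(W1 ⊓ W3) = 2 →
      Module.finrank (ZMod 2) ↥(W2 ⊓ W3) = 2 →
      Module.finrank (ZMod 2) ↥(W1 ⊓ W2 ⊓ W3) = 1 →
      ∀ T1 T2 T3 : Finset (Fin s → ZMod 2),
        IsTriple s T1 → ¬ IsBlock s T1 →
        IsTriple s T2 → ¬ IsBlock s T2 →
        IsTriple s T3 → ¬ IsBlock s T3 →
        Submodule.span (ZMod 2) (T1 : Set (Fin s → ZMod 2)) = W1 →
        Submodule.span (ZMod 2) (T2 : Set (Fin s → ZMod 2)) = W2 →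
        Submodule.span (ZMod 2) (T3 : Set (Fin s → ZMod 2)) = W3 →
        ¬ (col T1 ≠ col T2 ∧ col T1 ≠ col T3 ∧ col T2 ≠ col T3)) :
    ∀ a b c d : Fin s → ZMod 2,
      a ≠ 0 → b ≠ 0 → c ≠ 0 → d ≠ 0 →
      a ≠ b → a ≠ c → a ≠ d → b ≠ c → b ≠ d → c ≠ d →
      ¬ (col {a, b, c} ≠ col {a, b, d} ∧ col {a, b, c} ≠ col {b, c, d} ∧
         col {a, b, d} ≠ col {b, c, d}) := by
  intro a b c d ha hb hc hd hab hac had hbc hbd hcd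
  rintro ⟨h12, h13, h23⟩
  have tT1 : IsTriple s {a, b, c} := isTriple_mk a b c ha hb hc hab hac hbc
  have tT2 : IsTriple s {a, b, d} := isTriple_mk a b d ha hb hd hab had hbd
  have tT3 : IsTriple s {b, c, d} := isTriple_mk b c d hb hc hd hbc hbd hcd
  have hco1 : ((({a, b, c} : Finset (Fin s → ZMod 2))) : Set (Fin s → ZMod 2)) = {a, b, c} := by
    simp
  have hco2 : ((({a, b, d} : Finset (Fin s → ZMod 2))) : Set (Fin s → ZMod 2)) = {a, b, d} := by
    simp
  have hco3 : ((({b, c, d} : Finset (Fin s → ZMod 2))) : Set (Fin s → ZMod 2)) = {b, c, d} := by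
    simp
  by_cases B1 : IsBlock s {a, b, c}
  · -- T1 is a block, so c = a + b; then T2 and T3 are non-blocks with equal spans
    have hsum1 : a + b + c = 0 := (block_iff a b c ha hb hab hac hbc).1 B1
    have hc' : c = a + b := vthird a b c hsum1
    have B2 : ¬ IsBlock s {a, b, d} := by
      intro h
      have hsum2 : a + b + d = 0 := (block_iff a b d ha hb hab had hbd).1 h
      exact hcd (hc'.trans (vthird a b d hsum2).symm)
    have B3 : ¬ IsBlock s {b, c, d} := by
      intro h
      have hsum3 : b + c + d = 0 := (block_iff b c d hb hc hbc hbd hcd).1 h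
      apply had
      rw [vthird b c d hsum3, hc', add_comm a b, vcancel]
    have hsp : Submodule.span (ZMod 2) (({a, b, d} : Finset (Fin s → ZMod 2)) :
          Set (Fin s → ZMod 2)) =
        Submodule.span (ZMod 2) (({b, c, d} : Finset (Fin s → ZMod 2)) :
          Set (Fin s → ZMod 2)) := by
      rw [hco2, hco3, hc']
      have heq : b + (a + b) = a := by rw [add_comm a b]; exact vcancel b a
      apply le_antisymm
      · refine span3_le ?_ (mem3₁ b (a + b) d) (mem3₃ b (a + b) d)
        have h := add_mem (mem3₁ b (a + b) d) (mem3₂ b (a + b) d)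
        rwa [heq] at h
      · exact span3_le (mem3₂ a b d) (add_mem (mem3₁ a b d) (mem3₂ a b d)) (mem3₃ a b d)
    exact h23 (hspan _ _ tT2 B2 tT3 B3 hsp)
  by_cases B2 : IsBlock s {a, b, d}
  · -- T2 is a block, so d = a + b; then T1 and T3 are non-blocks with equal spans
    have hsum2 : a + b + d = 0 := (block_iff a b d ha hb hab had hbd).1 B2
    have hd' : d = a + b := vthird a b d hsum2
    have B3 : ¬ IsBlock s {b, c, d} := by
      intro h
      have hsum3 : b + c + d = 0 := (block_iff b c d hb hc hbc hbd hcd).1 h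
      have hsum3' : b + d + c = 0 := by rwa [add_right_comm] at hsum3
      apply hac
      rw [vthird b d c hsum3', hd', add_comm a b, vcancel]
    have hsp : Submodule.span (ZMod 2) (({a, b, c} : Finset (Fin s → ZMod 2)) :
          Set (Fin s → ZMod 2)) =
        Submodule.span (ZMod 2) (({b, c, d} : Finset (Fin s → ZMod 2)) :
          Set (Fin s → ZMod 2)) := by
      rw [hco1, hco3, hd']
      have heq : b + (a + b) = a := by rw [add_comm a b]; exact vcancel b a
      apply le_antisymm
      · refine span3_le ?_ (mem3₁ b c (a + b)) (mem3₂ b c (a + b))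
        have h := add_mem (mem3₁ b c (a + b)) (mem3₃ b c (a + b))
        rwa [heq] at h
      · exact span3_le (mem3₂ a b c) (mem3₃ a b c) (add_mem (mem3₁ a b c) (mem3₂ a b c))
    exact h13 (hspan _ _ tT1 B1 tT3 B3 hsp)
  by_cases B3 : IsBlock s {b, c, d}
  · -- T3 is a block, so d = b + c; then T1 and T2 are non-blocks with equal spans
    have hsum3 : b + c + d = 0 := (block_iff b c d hb hc hbc hbd hcd).1 B3
    have hd' : d = b + c := vthird b c d hsum3
    have hsp : Submodule.span (ZMod 2) (({a, b, c} : Finset (Fin s → ZMod 2)) :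
          Set (Fin s → ZMod 2)) =
        Submodule.span (ZMod 2) (({a, b, d} : Finset (Fin s → ZMod 2)) :
          Set (Fin s → ZMod 2)) := by
      rw [hco1, hco2, hd']
      apply le_antisymm
      · refine span3_le (mem3₁ a b (b + c)) (mem3₂ a b (b + c)) ?_
        have h := add_mem (mem3₂ a b (b + c)) (mem3₃ a b (b + c))
        rwa [vcancel b c] at h
      · exact span3_le (mem3₁ a b c) (mem3₂ a b c) (add_mem (mem3₂ a b c) (mem3₃ a b c))
    exact h12 (hspan _ _ tT1 B1 tT2 B2 hsp)
  -- All three triples are non-blocks.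
  have habc : a + b + c ≠ 0 := fun h0 => B1 ((block_iff a b c ha hb hab hac hbc).2 h0)
  have habd : a + b + d ≠ 0 := fun h0 => B2 ((block_iff a b d ha hb hab had hbd).2 h0)
  have hbcd : b + c + d ≠ 0 := fun h0 => B3 ((block_iff b c d hb hc hbc hbd hcd).2 h0)
  have r1 := finrank_span_triple a b c ha hb hc hab hac hbc habc
  have r2 := finrank_span_triple a b d ha hb hd hab had hbd habd
  have r3 := finrank_span_triple b c d hb hc hd hbc hbd hcd hbcd
  have hW12 : span (ZMod 2) ({a, b, c} : Set (Fin s → ZMod 2)) ≠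
      span (ZMod 2) ({a, b, d} : Set (Fin s → ZMod 2)) :=
    fun h => h12 (hspan _ _ tT1 B1 tT2 B2 (by rw [hco1, hco2]; exact h))
  have hW13 : span (ZMod 2) ({a, b, c} : Set (Fin s → ZMod 2)) ≠
      span (ZMod 2) ({b, c, d} : Set (Fin s → ZMod 2)) :=
    fun h => h13 (hspan _ _ tT1 B1 tT3 B3 (by rw [hco1, hco3]; exact h))
  have hW23 : span (ZMod 2) ({a, b, d} : Set (Fin s → ZMod 2)) ≠
      span (ZMod 2) ({b, c, d} : Set (Fin s → ZMod 2)) :=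
    fun h => h23 (hspan _ _ tT2 B2 tT3 B3 (by rw [hco2, hco3]; exact h))
  -- d is not in the span of {a, b, c}
  obtain ⟨r12, r13, r23, r123⟩ := dims_bundle a b c d ha hb hc hd hab hac had hbc hbd hcd
    habc habd hbcd hW12
  exact hgood (span (ZMod 2) ({a, b, c} : Set (Fin s → ZMod 2)))
    (span (ZMod 2) ({a, b, d} : Set (Fin s → ZMod 2)))
    (span (ZMod 2) ({b, c, d} : Set (Fin s → ZMod 2)))
    hW12 hW13 hW23 r1 r2 r3 r12 r13 r23 r123
    {a, b, c} {a, b, d} {b, c, d} tT1 B1 tT2 B2 tT3 B3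
    (by rw [hco1]) (by rw [hco2]) (by rw [hco3]) ⟨h12, h13, h23⟩
end

section
/- Let s ≥ 3 be an integer and n = 2^s − 1. Let A(s) denote the maximum size of a family of 3-dimensional linear subspaces of 𝔽₂^s such that any two distinct members intersect in a subspace of dimension at most 1. Then ar(n, F4) ≥ m(n) + A(s). -/
/-- The number of colors used by the edge-coloring `col` on the `p`-element
subsets (edges) of the vertex set `Fin n`. -/
def numColors (n p : ℕ) (col : Finset (Fin n) → ℕ) : ℕ :=
  (((Finset.univ : Finset (Finset (Fin n))).filter (fun e => e.card = p)).image col).card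

/-- An edge-coloring of `K_n^(p)` is rainbow cancellative if there are no three
edges `A, B, C` with pairwise distinct colors such that `A △ B ⊆ C`. -/
def RainbowCancellative (n p : ℕ) (col : Finset (Fin n) → ℕ) : Prop :=
  ∀ A B C : Finset (Fin n), A.card = p → B.card = p → C.card = p →
    col A ≠ col B → col A ≠ col C → col B ≠ col C →
    ¬ ((A \ B) ∪ (B \ A) ⊆ C)
/-- Rainbow `F4`-free: no four distinct vertices `a b c d` such that the triples
`abc, abd, bcd` receive pairwise distinct colors. -/
def RainbowF4Free (n : ℕ) (col : Finset (Fin n) → ℕ) : Prop :=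
  ∀ a b c d : Fin n, a ≠ b → a ≠ c → a ≠ d → b ≠ c → b ≠ d → c ≠ d →
    ¬ (col {a, b, c} ≠ col {a, b, d} ∧ col {a, b, c} ≠ col {b, c, d} ∧
       col {a, b, d} ≠ col {b, c, d})

/-- Rainbow `F5`-free: no five distinct vertices `a b c d e` such that the triples
`abc, abd, cde` receive pairwise distinct colors. -/
def RainbowF5Free (n : ℕ) (col : Finset (Fin n) → ℕ) : Prop :=
  ∀ a b c d e : Fin n,
    a ≠ b → a ≠ c → a ≠ d → a ≠ e → b ≠ c → b ≠ d → b ≠ e → c ≠ d → c ≠ e → d ≠ e →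
    ¬ (col {a, b, c} ≠ col {a, b, d} ∧ col {a, b, c} ≠ col {c, d, e} ∧
       col {a, b, d} ≠ col {c, d, e})

/-- A partial Steiner triple system on the vertex set `Fin n`: a family of
3-element sets in which every pair of vertices lies in at most one triple
(equivalently, two distinct triples meet in at most one vertex). -/
def IsPSTS (n : ℕ) (P : Finset (Finset (Fin n))) : Prop :=
  (∀ T ∈ P, T.card = 3) ∧
  ∀ T1 ∈ P, ∀ T2 ∈ P, T1 ≠ T2 → (T1 ∩ T2).card ≤ 1

/-- `mPSTS n` is the maximum number of triples in a partial Steiner triple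
system on `n` vertices. -/
noncomputable def mPSTS (n : ℕ) : ℕ :=
  sSup {k : ℕ | ∃ P : Finset (Finset (Fin n)), IsPSTS n P ∧ P.card = k}

/-- `maxSubspaceFamily s` is the maximum size of a family of 3-dimensional
linear subspaces of `𝔽₂^s` any two distinct members of which intersect in a
subspace of dimension at most 1. -/
noncomputable def maxSubspaceFamily (s : ℕ) : ℕ :=
  sSup {k : ℕ | ∃ F : Finset (Submodule (ZMod 2) (Fin s → ZMod 2)),
    (∀ W ∈ F, Module.finrank (ZMod 2) W = 3) ∧
    (∀ W1 ∈ F, ∀ W2 ∈ F, W1 ≠ W2 → Module.finrank (ZMod 2) ↥(W1 ⊓ W2) ≤ 1) ∧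
    F.card = k}

/-!
Identify the `2^s - 1` vertices with the nonzero vectors of `𝔽₂^s`. The lines `{x, y, x + y}` of
the projective space cover every pair exactly once, so they form a partial Steiner triple system
of maximum size; give each line its own color. Fix an optimal family `F` of 3-dimensional
subspaces. Two members of `F` share at most one nonzero vector, so any other triple lies in at most
one member of `F`: color it by that member, or by one common color if there is none. A basis of
each member is a triple which is not a line, so all `m(n) + A(s)` colors occur.

In a copy `abc, abd, bcd` of `F4`, two lines would share two points, so at most one triple is a
line. If `abc` is a line, then `abd` and `bcd` lie in the same subspaces and get the same color.
If none is a line, by pigeonhole two of the triples both lie in members of `F` or both do not;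
since they share two points, they then lie in the same members and get the same color.
-/

open Finset Module

lemma eq_of_subset_of_card_le_one {β : Type*} {A B S : Finset β} (hA : A ⊆ S) (hB : B ⊆ S)
    (hS : S.card ≤ 1) (h : A.Nonempty ↔ B.Nonempty) : A = B := by
  rcases A.eq_empty_or_nonempty with rfl | hA₀
  · exact (not_nonempty_iff_eq_empty.mp (h.not.mp (by simp))).symm
  · rw [eq_of_subset_of_card_le hA (hS.trans hA₀.card_pos),
      eq_of_subset_of_card_le hB (hS.trans (h.mp hA₀).card_pos)]

section Triples

variable {α : Type*} [DecidableEq α]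

lemma card_triple {a b c : α} (hab : a ≠ b) (hac : a ≠ c) (hbc : b ≠ c) :
    ({a, b, c} : Finset α).card = 3 :=
  card_eq_three.mpr ⟨a, b, c, hab, hac, hbc, rfl⟩

lemma sum_triple {M : Type*} [AddCommMonoid M] (f : α → M) {a b c : α}
    (hab : a ≠ b) (hac : a ≠ c) (hbc : b ≠ c) :
    ∑ i ∈ {a, b, c}, f i = f a + f b + f c := by
  rw [sum_insert (by simp [hab, hac]), sum_pair hbc, add_assoc]

lemma exists_eq_triple_of_card_eq_three {T : Finset α} (hT : T.card = 3) {x y : α}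
    (hx : x ∈ T) (hy : y ∈ T) (hxy : x ≠ y) : ∃ z, x ≠ z ∧ y ≠ z ∧ T = {x, y, z} := by
  have hy' : y ∈ T.erase x := mem_erase.mpr ⟨hxy.symm, hy⟩
  obtain ⟨z, hz⟩ := card_eq_one.mp <| show ((T.erase x).erase y).card = 1 by
    rw [card_erase_of_mem hy', card_erase_of_mem hx, hT]
  have hzT : z ∈ (T.erase x).erase y := hz ▸ mem_singleton_self z
  refine ⟨z, fun h => ?_, fun h => ?_, ?_⟩
  · exact (mem_erase.mp (mem_erase.mp hzT).2).1 h.symm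
  · exact (mem_erase.mp hzT).1 h.symm
  · rw [← insert_erase hx, ← insert_erase hy', hz]

lemma card_biUnion_powersetCard_two {Q : Finset (Finset α)} (hQ3 : ∀ T ∈ Q, T.card = 3)
    (hQ : ∀ T₁ ∈ Q, ∀ T₂ ∈ Q, T₁ ≠ T₂ → (T₁ ∩ T₂).card ≤ 1) :
    (Q.biUnion (powersetCard 2)).card = 3 * Q.card := by
  rw [card_biUnion, sum_congr rfl fun T hT => by rw [card_powersetCard, hQ3 T hT], sum_const,
    smul_eq_mul, mul_comm]
  · rfl
  intro T₁ h₁ T₂ h₂ hne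
  refine disjoint_left.mpr fun p hp₁ hp₂ => ?_
  rw [mem_powersetCard] at hp₁ hp₂
  have := (card_le_card (subset_inter hp₁.1 hp₂.1)).trans (hQ T₁ h₁ T₂ h₂ hne)
  omega

end Triples

section SteinerTripleSystems

variable {n : ℕ}

lemma card_le_card_of_isPSTS_of_covers {P Q : Finset (Finset (Fin n))} (hP : IsPSTS n P)
    (hQ : IsPSTS n Q) (hcover : ∀ p : Finset (Fin n), p.card = 2 → ∃ T ∈ Q, p ⊆ T) :
    P.card ≤ Q.card := by
  have hsub : P.biUnion (powersetCard 2) ⊆ Q.biUnion (powersetCard 2) := by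
    intro p hp
    obtain ⟨_, _, hp₂⟩ := mem_biUnion.mp hp
    have hcard := (mem_powersetCard.mp hp₂).2
    obtain ⟨T, hT, hpT⟩ := hcover p hcard
    exact mem_biUnion.mpr ⟨T, hT, mem_powersetCard.mpr ⟨hpT, hcard⟩⟩
  have := card_le_card hsub
  rw [card_biUnion_powersetCard_two hP.1 hP.2, card_biUnion_powersetCard_two hQ.1 hQ.2] at this
  omega

lemma mPSTS_le_of_covers {Q : Finset (Finset (Fin n))} (hQ : IsPSTS n Q)
    (hcover : ∀ p : Finset (Fin n), p.card = 2 → ∃ T ∈ Q, p ⊆ T) : mPSTS n ≤ Q.card :=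
  csSup_le ⟨0, ∅, ⟨by simp, by simp⟩, rfl⟩ <| by
    rintro k ⟨P, hP, rfl⟩
    exact card_le_card_of_isPSTS_of_covers hP hQ hcover

end SteinerTripleSystems

lemma Submodule.mem_iff_of_add_add_eq_zero {R M : Type*} [Ring R] [AddCommGroup M] [Module R M]
    (W : Submodule R M) {x y z : M} (h : x + y + z = 0) (hy : y ∈ W) : x ∈ W ↔ z ∈ W := by
  rw [← W.add_mem_iff_left hy, eq_neg_of_add_eq_zero_left h, W.neg_mem_iff]

section ZModTwo

variable {V : Type*} [AddCommGroup V] [Module (ZMod 2) V]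

lemma eq_of_mem_of_finrank_le_one {U : Submodule (ZMod 2) V} [FiniteDimensional (ZMod 2) U]
    (hU : finrank (ZMod 2) U ≤ 1) {x y : V} (hx : x ∈ U) (hy : y ∈ U) (hx₀ : x ≠ 0)
    (hy₀ : y ≠ 0) : x = y := by
  obtain ⟨g, hg⟩ := finrank_le_one_iff.mp hU
  have key : ∀ u (hu : u ∈ U), u ≠ 0 → u = g := by
    intro u hu hu₀
    obtain ⟨c, hc⟩ := hg ⟨u, hu⟩
    obtain rfl | rfl := (by decide : ∀ a : ZMod 2, a = 0 ∨ a = 1) c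
    · rw [zero_smul] at hc
      exact absurd (congrArg Subtype.val hc).symm hu₀
    · rw [one_smul] at hc
      exact (congrArg Subtype.val hc).symm
  rw [key x hx hx₀, key y hy hy₀]

lemma eq_of_mem_of_mem_of_finrank_inf_le_one [FiniteDimensional (ZMod 2) V]
    {W₁ W₂ : Submodule (ZMod 2) V} (h : W₁ ≠ W₂ → finrank (ZMod 2) ↥(W₁ ⊓ W₂) ≤ 1)
    {x y : V} (hxy : x ≠ y) (hx₀ : x ≠ 0) (hy₀ : y ≠ 0) (hx₁ : x ∈ W₁) (hy₁ : y ∈ W₁)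
    (hx₂ : x ∈ W₂) (hy₂ : y ∈ W₂) : W₁ = W₂ := by
  by_contra hne
  exact hxy (eq_of_mem_of_finrank_le_one (h hne) ⟨hx₁, hx₂⟩ ⟨hy₁, hy₂⟩ hx₀ hy₀)

end ZModTwo

section ProjectiveSpace

variable {V : Type*} [AddCommGroup V] {n : ℕ} (e : Fin n ≃ {w : V // w ≠ 0})

open Classical in
/-- Over `𝔽₂` these are the lines `{x, y, x + y}` of the projective space. -/
noncomputable def projectiveLines : Finset (Finset (Fin n)) :=
  univ.filter fun T => T.card = 3 ∧ ∑ i ∈ T, (e i : V) = 0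

lemma mem_projectiveLines {T : Finset (Fin n)} :
    T ∈ projectiveLines e ↔ T.card = 3 ∧ ∑ i ∈ T, (e i : V) = 0 := by
  simp [projectiveLines]

lemma isPSTS_projectiveLines : IsPSTS n (projectiveLines e) := by
  refine ⟨fun T hT => ((mem_projectiveLines e).mp hT).1, fun T₁ h₁ T₂ h₂ hne => ?_⟩
  rw [mem_projectiveLines] at h₁ h₂
  by_contra! hlt
  obtain ⟨x, hx, y, hy, hxy⟩ := one_lt_card.mp hlt
  rw [mem_inter] at hx hy
  obtain ⟨z₁, hxz₁, hyz₁, rfl⟩ := exists_eq_triple_of_card_eq_three h₁.1 hx.1 hy.1 hxy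
  obtain ⟨z₂, hxz₂, hyz₂, rfl⟩ := exists_eq_triple_of_card_eq_three h₂.1 hx.2 hy.2 hxy
  rw [sum_triple _ hxy hxz₁ hyz₁] at h₁
  rw [sum_triple _ hxy hxz₂ hyz₂] at h₂
  have : z₁ = z₂ := e.injective (Subtype.ext (add_left_cancel (h₁.2.trans h₂.2.symm)))
  exact hne (by rw [this])

variable [Module (ZMod 2) V]

lemma projectiveLines_covers (p : Finset (Fin n)) (hp : p.card = 2) :
    ∃ T ∈ projectiveLines e, p ⊆ T := by
  obtain ⟨x, y, hxy, rfl⟩ := card_eq_two.mp hp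
  have hv : ∀ {i j : Fin n}, (e i : V) = e j → i = j := fun h => e.injective (Subtype.ext h)
  have hsum : (e x : V) + e y ≠ 0 := fun h =>
    hxy (hv (by rw [eq_neg_of_add_eq_zero_left h, ZModModule.neg_eq_self]))
  set z := e.symm ⟨_, hsum⟩
  have hz : (e z : V) = e x + e y := by simp [z]
  have hxz : x ≠ z := fun h => (e y).2 (add_eq_left.mp (by rw [← hz, h]))
  have hyz : y ≠ z := fun h => (e x).2 (add_eq_right.mp (by rw [← hz, h]))
  refine ⟨{x, y, z}, (mem_projectiveLines e).mpr ⟨card_triple hxy hxz hyz, ?_⟩,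
    by simp [subset_iff]⟩
  rw [sum_triple _ hxy hxz hyz, hz, ZModModule.add_self]

open Classical in
noncomputable def planesThrough (F : Finset (Submodule (ZMod 2) V)) (T : Finset (Fin n)) :
    Finset (Submodule (ZMod 2) V) :=
  F.filter fun W => ∀ i ∈ T, (e i : V) ∈ W

open Classical in
/-- For a triple that is not a line, `planesThrough e F T` is empty or a single member of `F`. -/
noncomputable def projectiveColoring (F : Finset (Submodule (ZMod 2) V)) (T : Finset (Fin n)) :
    Finset (Fin n) ⊕ Finset (Submodule (ZMod 2) V) :=
  if ∑ i ∈ T, (e i : V) = 0 then .inl T else .inr (planesThrough e F T)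

lemma exists_triple_of_finrank_eq_three [FiniteDimensional (ZMod 2) V]
    {W : Submodule (ZMod 2) V} (hW : finrank (ZMod 2) W = 3) :
    ∃ T : Finset (Fin n), T.card = 3 ∧ ∑ i ∈ T, (e i : V) ≠ 0 ∧ ∀ i ∈ T, (e i : V) ∈ W := by
  let b := finBasisOfFinrankEq (ZMod 2) W hW
  have hli : LinearIndependent (ZMod 2) fun k => (b k : V) :=
    b.linearIndependent.map' W.subtype W.ker_subtype
  set g : Fin 3 → Fin n := fun k => e.symm ⟨b k, hli.ne_zero k⟩
  have hg : ∀ k, (e (g k) : V) = b k := fun k => by simp [g]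
  have hginj : Function.Injective g := fun k l h =>
    hli.injective (by simpa [hg] using congrArg (fun i => (e i : V)) h)
  refine ⟨univ.image g, by rw [card_image_of_injective _ hginj]; simp, fun h => ?_, by simp [hg]⟩
  rw [sum_image fun k _ l _ h => hginj h] at h
  simp only [hg] at h
  exact one_ne_zero (Fintype.linearIndependent_iff.mp hli (fun _ => 1) (by simpa using h) 0)

variable {e} {F : Finset (Submodule (ZMod 2) V)}

lemma mem_planesThrough {T : Finset (Fin n)} {W : Submodule (ZMod 2) V} :
    W ∈ planesThrough e F T ↔ W ∈ F ∧ ∀ i ∈ T, (e i : V) ∈ W := by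
  simp [planesThrough]

lemma planesThrough_anti {T T' : Finset (Fin n)} (h : T' ⊆ T) :
    planesThrough e F T ⊆ planesThrough e F T' := fun _ hW =>
  have hW := mem_planesThrough.mp hW
  mem_planesThrough.mpr ⟨hW.1, fun i hi => hW.2 i (h hi)⟩

lemma planesThrough_congr {T T' : Finset (Fin n)}
    (h : ∀ W : Submodule (ZMod 2) V, (∀ i ∈ T, (e i : V) ∈ W) ↔ ∀ i ∈ T', (e i : V) ∈ W) :
    planesThrough e F T = planesThrough e F T' := by
  ext W
  rw [mem_planesThrough, mem_planesThrough, h]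

lemma projectiveColoring_triple_of_ne_zero {a b c : Fin n} (hab : a ≠ b) (hac : a ≠ c)
    (hbc : b ≠ c) (h : (e a : V) + e b + e c ≠ 0) :
    projectiveColoring e F {a, b, c} = .inr (planesThrough e F {a, b, c}) :=
  if_neg (by rwa [sum_triple _ hab hac hbc])

variable [FiniteDimensional (ZMod 2) V]

lemma card_planesThrough_pair_le_one
    (hF : ∀ W₁ ∈ F, ∀ W₂ ∈ F, W₁ ≠ W₂ → finrank (ZMod 2) ↥(W₁ ⊓ W₂) ≤ 1) {x y : Fin n}
    (hxy : x ≠ y) :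
    (planesThrough e F {x, y}).card ≤ 1 := by
  refine card_le_one.mpr fun W₁ h₁ W₂ h₂ => ?_
  simp only [mem_planesThrough, mem_insert, mem_singleton, forall_eq_or_imp, forall_eq] at h₁ h₂
  exact eq_of_mem_of_mem_of_finrank_inf_le_one (hF W₁ h₁.1 W₂ h₂.1)
    (fun h => hxy (e.injective (Subtype.ext h))) (e x).2 (e y).2 h₁.2.1 h₁.2.2 h₂.2.1 h₂.2.2

lemma planesThrough_eq_of_mem
    (hF : ∀ W₁ ∈ F, ∀ W₂ ∈ F, W₁ ≠ W₂ → finrank (ZMod 2) ↥(W₁ ⊓ W₂) ≤ 1)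
    {T T' : Finset (Fin n)} {x y : Fin n} (hxy : x ≠ y)
    (hT : {x, y} ⊆ T) (hT' : {x, y} ⊆ T')
    (h : (planesThrough e F T).Nonempty ↔ (planesThrough e F T').Nonempty) :
    planesThrough e F T = planesThrough e F T' :=
  eq_of_subset_of_card_le_one (planesThrough_anti hT) (planesThrough_anti hT')
    (card_planesThrough_pair_le_one hF hxy) h

lemma projectiveColoring_not_rainbow
    (hF : ∀ W₁ ∈ F, ∀ W₂ ∈ F, W₁ ≠ W₂ → finrank (ZMod 2) ↥(W₁ ⊓ W₂) ≤ 1)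
    {a b c d : Fin n} (hab : a ≠ b) (hac : a ≠ c) (had : a ≠ d) (hbc : b ≠ c) (hbd : b ≠ d)
    (hcd : c ≠ d) :
    projectiveColoring e F {a, b, c} = projectiveColoring e F {a, b, d} ∨
      projectiveColoring e F {a, b, c} = projectiveColoring e F {b, c, d} ∨
      projectiveColoring e F {a, b, d} = projectiveColoring e F {b, c, d} := by
  have hv : ∀ {i j : Fin n}, (e i : V) = e j → i = j := fun h => e.injective (Subtype.ext h)
  by_cases L₁ : (e a : V) + e b + e c = 0
  · have L₂ : (e a : V) + e b + e d ≠ 0 := fun L₂ =>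
      hcd (hv (add_left_cancel (L₁.trans L₂.symm)))
    have L₃ : (e b : V) + e c + e d ≠ 0 := fun L₃ =>
      had (hv (by linear_combination (norm := module) L₁ - L₃))
    rw [projectiveColoring_triple_of_ne_zero hab had hbd L₂,
      projectiveColoring_triple_of_ne_zero hbc hbd hcd L₃]
    refine Or.inr (Or.inr (congrArg Sum.inr (planesThrough_congr fun W => ?_)))
    have := W.mem_iff_of_add_add_eq_zero L₁
    simp only [mem_insert, mem_singleton, forall_eq_or_imp, forall_eq]
    tauto
  by_cases L₂ : (e a : V) + e b + e d = 0
  · have L₃ : (e b : V) + e c + e d ≠ 0 := fun L₃ =>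
      hac (hv (by linear_combination (norm := module) L₂ - L₃))
    rw [projectiveColoring_triple_of_ne_zero hab hac hbc L₁,
      projectiveColoring_triple_of_ne_zero hbc hbd hcd L₃]
    refine Or.inr (Or.inl (congrArg Sum.inr (planesThrough_congr fun W => ?_)))
    have := W.mem_iff_of_add_add_eq_zero L₂
    simp only [mem_insert, mem_singleton, forall_eq_or_imp, forall_eq]
    tauto
  by_cases L₃ : (e b : V) + e c + e d = 0
  · rw [projectiveColoring_triple_of_ne_zero hab hac hbc L₁,
      projectiveColoring_triple_of_ne_zero hab had hbd L₂]
    refine Or.inl (congrArg Sum.inr (planesThrough_congr fun W => ?_))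
    have := W.mem_iff_of_add_add_eq_zero
      (by rwa [add_comm (e c : V)] : (e c : V) + e b + e d = 0)
    simp only [mem_insert, mem_singleton, forall_eq_or_imp, forall_eq]
    tauto
  rw [projectiveColoring_triple_of_ne_zero hab hac hbc L₁,
    projectiveColoring_triple_of_ne_zero hab had hbd L₂,
    projectiveColoring_triple_of_ne_zero hbc hbd hcd L₃]
  simp only [Sum.inr.injEq]
  have hsub : ∀ {x y z : Fin n}, ({x, y} : Finset (Fin n)) ⊆ {x, y, z} := by simp [subset_iff]
  rcases (by tauto : ∀ P₁ P₂ P₃ : Prop, (P₁ ↔ P₂) ∨ (P₁ ↔ P₃) ∨ (P₂ ↔ P₃))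
    (planesThrough e F {a, b, c}).Nonempty (planesThrough e F {a, b, d}).Nonempty
    (planesThrough e F {b, c, d}).Nonempty with h | h | h
  · exact Or.inl (planesThrough_eq_of_mem hF hab hsub hsub h)
  · exact Or.inr (Or.inl (planesThrough_eq_of_mem hF hbc (by simp [subset_iff]) hsub h))
  · exact Or.inr (Or.inr
      (planesThrough_eq_of_mem hF hbd (by simp [subset_iff]) (by simp [subset_iff]) h))

lemma rainbowF4Free_comp_projectiveColoring
    (hF : ∀ W₁ ∈ F, ∀ W₂ ∈ F, W₁ ≠ W₂ → finrank (ZMod 2) ↥(W₁ ⊓ W₂) ≤ 1)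
    (enc : Finset (Fin n) ⊕ Finset (Submodule (ZMod 2) V) → ℕ) :
    RainbowF4Free n (enc ∘ projectiveColoring e F) := by
  intro a b c d hab hac had hbc hbd hcd ⟨h₁₂, h₁₃, h₂₃⟩
  rcases projectiveColoring_not_rainbow hF hab hac had hbc hbd hcd with h | h | h
  · exact h₁₂ (congrArg enc h)
  · exact h₁₃ (congrArg enc h)
  · exact h₂₃ (congrArg enc h)

lemma card_projectiveLines_add_card_le [DecidableEq (Submodule (ZMod 2) V)]
    (hF₃ : ∀ W ∈ F, finrank (ZMod 2) W = 3)
    (hF : ∀ W₁ ∈ F, ∀ W₂ ∈ F, W₁ ≠ W₂ → finrank (ZMod 2) ↥(W₁ ⊓ W₂) ≤ 1) :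
    (projectiveLines e).card + F.card ≤
      (((univ : Finset (Finset (Fin n))).filter fun T => T.card = 3).image
        (projectiveColoring e F)).card := by
  have hlines : (projectiveLines e).image Sum.inl ⊆
      ((univ : Finset (Finset (Fin n))).filter fun T => T.card = 3).image
        (projectiveColoring e F) := by
    intro c hc
    obtain ⟨T, hT, rfl⟩ := mem_image.mp hc
    obtain ⟨h₃, h₀⟩ := (mem_projectiveLines e).mp hT
    exact mem_image.mpr ⟨T, by simpa using h₃, if_pos h₀⟩
  have hplanes : F.image (Sum.inr ∘ singleton) ⊆
      ((univ : Finset (Finset (Fin n))).filter fun T => T.card = 3).image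
        (projectiveColoring e F) := by
    intro c hc
    obtain ⟨W, hW, rfl⟩ := mem_image.mp hc
    obtain ⟨T, h₃, h₀, hTW⟩ := exists_triple_of_finrank_eq_three e (hF₃ W hW)
    obtain ⟨x, hx, y, hy, hxy⟩ := one_lt_card.mp (by omega : 1 < T.card)
    have hsub : {x, y} ⊆ T := by simp [insert_subset_iff, hx, hy]
    have hWT : W ∈ planesThrough e F T := mem_planesThrough.mpr ⟨hW, hTW⟩
    refine mem_image.mpr ⟨T, by simpa using h₃, (if_neg h₀).trans (congrArg Sum.inr ?_)⟩
    exact eq_of_subset_of_card_le_one (planesThrough_anti hsub)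
      (singleton_subset_iff.mpr (planesThrough_anti hsub hWT))
      (card_planesThrough_pair_le_one hF hxy) (iff_of_true ⟨W, hWT⟩ (singleton_nonempty W))
  calc (projectiveLines e).card + F.card
      = ((projectiveLines e).image Sum.inl ∪ F.image (Sum.inr ∘ singleton)).card := by
        rw [card_union_of_disjoint (disjoint_left.mpr (by simp)),
          card_image_of_injective _ Sum.inl_injective,
          card_image_of_injective _ (Sum.inr_injective.comp singleton_injective)]
    _ ≤ _ := card_le_card (union_subset hlines hplanes)

end ProjectiveSpace

lemma numColors_comp {n p : ℕ} {C : Type*} [DecidableEq C] {enc : C → ℕ}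
    (henc : Function.Injective enc) (col : Finset (Fin n) → C) :
    numColors n p (enc ∘ col) =
      (((univ : Finset (Finset (Fin n))).filter fun T => T.card = p).image col).card := by
  rw [numColors, ← image_image, card_image_of_injective _ henc]

lemma exists_card_eq_maxSubspaceFamily (s : ℕ) :
    ∃ F : Finset (Submodule (ZMod 2) (Fin s → ZMod 2)),
      (∀ W ∈ F, finrank (ZMod 2) W = 3) ∧
      (∀ W1 ∈ F, ∀ W2 ∈ F, W1 ≠ W2 → finrank (ZMod 2) ↥(W1 ⊓ W2) ≤ 1) ∧
      F.card = maxSubspaceFamily s := by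
  have := Fintype.ofFinite (Submodule (ZMod 2) (Fin s → ZMod 2))
  exact Nat.sSup_mem (s := {k | ∃ F : Finset (Submodule (ZMod 2) (Fin s → ZMod 2)),
      (∀ W ∈ F, finrank (ZMod 2) W = 3) ∧
      (∀ W1 ∈ F, ∀ W2 ∈ F, W1 ≠ W2 → finrank (ZMod 2) ↥(W1 ⊓ W2) ≤ 1) ∧ F.card = k})
    ⟨0, ∅, by simp, by simp, rfl⟩ ⟨Fintype.card (Submodule (ZMod 2) (Fin s → ZMod 2)), by
      rintro k ⟨F, -, -, rfl⟩
      exact card_le_univ F⟩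

theorem ar_F4_lower_projective_general (s : ℕ) :
    ∃ col : Finset (Fin (2 ^ s - 1)) → ℕ,
      RainbowF4Free (2 ^ s - 1) col ∧
      mPSTS (2 ^ s - 1) + maxSubspaceFamily s ≤ numColors (2 ^ s - 1) 3 col := by
  classical
  let e : Fin (2 ^ s - 1) ≃ {w : Fin s → ZMod 2 // w ≠ 0} :=
    Fintype.equivOfCardEq (by simp [Fintype.card_subtype_compl, ZMod.card])
  obtain ⟨F, hF₃, hF, hFcard⟩ := exists_card_eq_maxSubspaceFamily s
  obtain ⟨enc, henc⟩ :=
    exists_injective_nat (Finset (Fin (2 ^ s - 1)) ⊕ Finset (Submodule (ZMod 2) (Fin s → ZMod 2)))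
  refine ⟨enc ∘ projectiveColoring e F, rainbowF4Free_comp_projectiveColoring hF enc, ?_⟩
  rw [numColors_comp henc, ← hFcard]
  calc mPSTS (2 ^ s - 1) + F.card ≤ (projectiveLines e).card + F.card := by
        gcongr
        exact mPSTS_le_of_covers (isPSTS_projectiveLines e) (projectiveLines_covers e)
    _ ≤ _ := card_projectiveLines_add_card_le hF₃ hF

/-- For `s ≥ 3` and `n = 2^s - 1`, `ar(n, F4) ≥ m(n) + A(s)`. -/
theorem ar_F4_lower_projective (s : ℕ) (hs : 3 ≤ s) :
    ∃ col : Finset (Fin (2 ^ s - 1)) → ℕ,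
      RainbowF4Free (2 ^ s - 1) col ∧
      mPSTS (2 ^ s - 1) + maxSubspaceFamily s ≤ numColors (2 ^ s - 1) 3 col :=
  ar_F4_lower_projective_general s
end

section
/- Let Q be an edge-coloring of the complete graph on a finite nonempty vertex set that contains no rainbow triangle (no three vertices whose three connecting edges receive pairwise distinct colors). Let c(Q) be the number of colors used, and let ρ(Q) be the number of colors λ such that the edges of color λ contain a monochromatic triangle. Then c(Q) + ρ(Q) ≤ |V(Q)| − 1. -/
/-!
Call a color *spanning* if its color class is a connected spanning subgraph, and split the
vertices into the connected components of the graph formed by the edges of non-spanning colors.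
Without rainbow triangles, a vertex outside a component sees the whole component in a single
color, so the color between two components is well defined, and it is spanning. Choosing, among
the non-spanning colors, a largest monochromatic component shows that there are at least two
components. In the quotient coloring of the `k` components every color class is connected, hence
has at least `k - 1` edges, and at least `k` when it contains a triangle; as the classes share
the `k(k-1)/2` edges, the quotient satisfies `c + ρ ≤ k - 1`. A color of the whole coloring is
counted inside a component or on the quotient, and a triangle color used on no edge inside a
component is a triangle color of the quotient, so induction on the number of vertices gives
`c + ρ ≤ ∑ (|Vᵢ| - 1) + (k - 1) = |V| - 1`.
-/

open Finset Function SimpleGraph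

lemma SimpleGraph.Connected.card_vert_le_card_edgeSet_of_not_cliqueFree {V : Type*} [Finite V]
    {G : SimpleGraph V} (h : G.Connected) (h3 : ¬ G.CliqueFree 3) :
    Nat.card V ≤ Nat.card G.edgeSet := by
  have := h.card_vert_le_card_edgeSet_add_one
  by_contra hlt
  exact h3 ((isTree_iff_connected_and_card.mpr ⟨h, by omega⟩).isAcyclic.cliqueFree le_rfl)

namespace EdgeColoring

variable {V W Q α : Type*}

section Basic

variable (col : Sym2 V → α)

def IsGallai : Prop :=
  ∀ x y z : V, x ≠ y → x ≠ z → y ≠ z →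
    col s(x, y) = col s(x, z) ∨ col s(x, y) = col s(y, z) ∨ col s(x, z) = col s(y, z)

def usedColors : Set α := col '' {e : Sym2 V | ¬ e.IsDiag}

def triangleColors : Set α :=
  {c | ∃ x y z : V, x ≠ y ∧ x ≠ z ∧ y ≠ z ∧
    col s(x, y) = c ∧ col s(x, z) = c ∧ col s(y, z) = c}

def colorGraph (T : Set α) : SimpleGraph V := fromEdgeSet (col ⁻¹' T)

def spanningColors : Set α := {c | (colorGraph col {c}).Connected}

def fiberColoring (f : V → Q) (q : Q) : Sym2 {v // f v = q} → α := col ∘ Sym2.map (↑)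

variable {col}

@[simp]
lemma colorGraph_adj {T : Set α} {x y : V} :
    (colorGraph col T).Adj x y ↔ x ≠ y ∧ col s(x, y) ∈ T := by
  simp [colorGraph, and_comm]

lemma mk_mem_usedColors {x y : V} (hxy : x ≠ y) : col s(x, y) ∈ usedColors col :=
  ⟨s(x, y), by simpa using hxy, rfl⟩

lemma triangleColors_subset_usedColors : triangleColors col ⊆ usedColors col := by
  rintro c ⟨x, y, -, hxy, -, -, rfl, -, -⟩
  exact mk_mem_usedColors hxy

lemma usedColors_finite [Finite V] : (usedColors col).Finite := (Set.toFinite _).image col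

lemma triangleColors_finite [Finite V] : (triangleColors col).Finite :=
  usedColors_finite.subset triangleColors_subset_usedColors

lemma usedColors_eq_empty [Subsingleton V] : usedColors col = ∅ := by
  refine Set.eq_empty_iff_forall_notMem.mpr ?_
  rintro c ⟨e, he, -⟩
  induction e with
  | _ x y => exact he (Sym2.mk_isDiag_iff.mpr (Subsingleton.elim x y))

lemma ncard_usedColors_add_ncard_triangleColors_of_subsingleton [Subsingleton V] :
    (usedColors col).ncard + (triangleColors col).ncard = 0 := by
  have htri := usedColors_eq_empty (col := col) ▸ triangleColors_subset_usedColors (col := col)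
  rw [Set.subset_empty_iff.mp htri, usedColors_eq_empty, Set.ncard_empty]

lemma IsGallai.comp_sym2Map (h : IsGallai col) {g : W → V} (hg : Injective g) :
    IsGallai (col ∘ Sym2.map g) := by
  intro x y z hxy hxz hyz
  simpa using h (g x) (g y) (g z) (hg.ne hxy) (hg.ne hxz) (hg.ne hyz)

end Basic

section Gallai

variable {col : Sym2 V → α} {T : Set α}

lemma col_notMem_of_not_reachable {x y : V} (hxy : x ≠ y)
    (h : ¬ (colorGraph col T).Reachable x y) : col s(x, y) ∉ T :=
  fun hT => h (colorGraph_adj.mpr ⟨hxy, hT⟩).reachable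

lemma IsGallai.col_eq_of_adj (h : IsGallai col) {v a b : V} (hab : (colorGraph col T).Adj a b)
    (hva : ¬ (colorGraph col T).Reachable v a) : col s(v, a) = col s(v, b) := by
  have hvb : ¬ (colorGraph col T).Reachable v b := fun hvb =>
    hva (hvb.trans hab.reachable.symm)
  have hva' : v ≠ a := by rintro rfl; exact hva .rfl
  have hvb' : v ≠ b := by rintro rfl; exact hvb .rfl
  have hab' := colorGraph_adj.mp hab
  rcases h v a b hva' hvb' hab'.1 with he | he | he
  · exact he
  · exact absurd (he ▸ hab'.2) (col_notMem_of_not_reachable hva' hva)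
  · exact absurd (he ▸ hab'.2) (col_notMem_of_not_reachable hvb' hvb)

lemma IsGallai.col_eq_of_reachable (h : IsGallai col) {v a b : V}
    (hab : (colorGraph col T).Reachable a b) (hva : ¬ (colorGraph col T).Reachable v a) :
    col s(v, a) = col s(v, b) := by
  rw [reachable_iff_reflTransGen] at hab
  induction hab with
  | refl => rfl
  | tail hac hcb ih =>
    refine ih.trans (h.col_eq_of_adj hcb fun hvc => hva (hvc.trans ?_))
    exact ((reachable_iff_reflTransGen _ _).mpr hac).symm

lemma IsGallai.col_eq_of_reachable_of_reachable (h : IsGallai col) {x x' y y' : V}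
    (hx : (colorGraph col T).Reachable x x') (hy : (colorGraph col T).Reachable y y')
    (hxy : ¬ (colorGraph col T).Reachable x y) : col s(x, y) = col s(x', y') := by
  rw [h.col_eq_of_reachable hy hxy, Sym2.eq_swap, Sym2.eq_swap (a := x')]
  exact h.col_eq_of_reachable hx fun hyx => hxy (hy.trans hyx).symm

lemma IsGallai.exists_forall_not_reachable_mem [Finite V] (h : IsGallai col)
    (hT : ∃ x y, x ≠ y ∧ col s(x, y) ∉ T) :
    ∃ γ ∉ T, ∃ x₀ : V, ∀ v, ¬ (colorGraph col {γ}).Reachable x₀ v → col s(v, x₀) ∈ T := by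
  let comp : V × V → Set V := fun p => {z | (colorGraph col {col s(p.1, p.2)}).Reachable p.1 z}
  obtain ⟨⟨x₀, y₀⟩, ⟨-, hγ⟩, hmax⟩ :=
    Set.exists_max_image {p : V × V | p.1 ≠ p.2 ∧ col s(p.1, p.2) ∉ T} (fun p => (comp p).ncard)
      (Set.toFinite _) (let ⟨x, y, hxy, hc⟩ := hT; ⟨(x, y), hxy, hc⟩)
  refine ⟨_, hγ, x₀, fun v hv => ?_⟩
  by_contra hδ
  have hvx₀ : v ≠ x₀ := by rintro rfl; exact hv .rfl
  -- `v` sees the whole component of `x₀` in one color, giving a larger component.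
  have hsub : comp (x₀, y₀) ⊂ comp (v, x₀) := by
    refine (Set.ssubset_iff_of_subset fun z hz => ?_).mpr ⟨v, .rfl, hv⟩
    have hvz : v ≠ z := by rintro rfl; exact hv hz
    have hsees := h.col_eq_of_reachable hz fun hvx => hv hvx.symm
    exact (colorGraph_adj.mpr ⟨hvz, hsees.symm⟩).reachable
  exact (Set.ncard_lt_ncard hsub).not_ge (hmax (v, x₀) ⟨hvx₀, hδ⟩)

lemma IsGallai.not_preconnected_colorGraph_compl_spanningColors [Finite V] [Nontrivial V]
    (h : IsGallai col) : ¬ (colorGraph col (spanningColors col)ᶜ).Preconnected := by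
  intro hpre
  by_cases hT : ∃ x y, x ≠ y ∧ col s(x, y) ∉ spanningColors col
  · obtain ⟨γ, hγ, x₀, hx₀⟩ := h.exists_forall_not_reachable_mem hT
    obtain ⟨v, hv⟩ : ∃ v, ¬ (colorGraph col {γ}).Reachable x₀ v := by
      by_contra! hall
      exact hγ ((connected_iff _).mpr ⟨fun a b => (hall a).symm.trans (hall b), ⟨x₀⟩⟩)
    have hclosed : ∀ w, (colorGraph col (spanningColors col)ᶜ).Reachable x₀ w →
        (colorGraph col {γ}).Reachable x₀ w := by
      intro w hw
      rw [reachable_iff_reflTransGen] at hw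
      induction hw with
      | refl => exact .rfl
      | @tail c d _ hcd ih =>
        by_contra hd
        refine (colorGraph_adj.mp hcd).2 ?_
        rw [Sym2.eq_swap, ← h.col_eq_of_reachable ih fun hdx => hd hdx.symm]
        exact hx₀ d hd
    exact hv (hclosed v (hpre x₀ v))
  · push Not at hT
    obtain ⟨x, y, hxy⟩ := exists_pair_ne V
    obtain ⟨w⟩ := hpre x y
    cases w with
    | nil => exact hxy rfl
    | cons hadj _ => exact (colorGraph_adj.mp hadj).2 (hT _ _ (colorGraph_adj.mp hadj).1)

lemma IsGallai.nontrivial_connectedComponent [Finite V] [Nontrivial V] (h : IsGallai col) :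
    Nontrivial (colorGraph col (spanningColors col)ᶜ).ConnectedComponent := by
  rw [← not_subsingleton_iff_nontrivial]
  exact fun _ => h.not_preconnected_colorGraph_compl_spanningColors
    fun u v => ConnectedComponent.exact (Subsingleton.elim _ _)

variable (col T) in
/-- Well defined, independently of the chosen representatives, by
`IsGallai.col_eq_reducedColoring`. -/
noncomputable def reducedColoring : Sym2 (colorGraph col T).ConnectedComponent → α :=
  col ∘ Sym2.map Quot.out

lemma reachable_out (x : V) :
    (colorGraph col T).Reachable x ((colorGraph col T).connectedComponentMk x).out :=
  ConnectedComponent.exact (Quot.out_eq _).symm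

lemma IsGallai.col_eq_reducedColoring (h : IsGallai col) {x y : V}
    (hxy : (colorGraph col T).connectedComponentMk x ≠
      (colorGraph col T).connectedComponentMk y) :
    col s(x, y) = reducedColoring col T s((colorGraph col T).connectedComponentMk x,
      (colorGraph col T).connectedComponentMk y) :=
  h.col_eq_of_reachable_of_reachable (reachable_out x) (reachable_out y)
    (mt ConnectedComponent.sound hxy)

lemma usedColors_reducedColoring_subset : usedColors (reducedColoring col T) ⊆ Tᶜ := by
  rintro c ⟨e, he, rfl⟩
  induction e with
  | _ q q' =>
    have hne : q ≠ q' := fun h => he (Sym2.mk_isDiag_iff.mpr h)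
    have hout : ¬ (colorGraph col T).Reachable q.out q'.out := fun hr =>
      hne ((Quot.out_eq q).symm.trans ((ConnectedComponent.sound hr).trans (Quot.out_eq q')))
    exact col_notMem_of_not_reachable (col := col) (fun h => hout (h ▸ .rfl)) hout

end Gallai

section Quotient

variable {col : Sym2 V → α} {red : Sym2 Q → α} {f : V → Q} {T : Set α}

lemma reachable_colorGraph_map (hcross : ∀ x y, f x ≠ f y → col s(x, y) = red s(f x, f y))
    {a b : V} (h : (colorGraph col T).Reachable a b) :
    (colorGraph red T).Reachable (f a) (f b) := by
  rw [reachable_iff_reflTransGen] at h ⊢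
  refine Relation.ReflTransGen.lift' f (fun x y hxy => ?_) _ _ h
  by_cases hfxy : f x = f y
  · simp only [Function.onFun, hfxy]
    exact .refl
  · have hxy' := colorGraph_adj.mp hxy
    exact .single (colorGraph_adj.mpr ⟨hfxy, hcross x y hfxy ▸ hxy'.2⟩)

lemma connected_colorGraph_of_surjective (hf : Surjective f)
    (hcross : ∀ x y, f x ≠ f y → col s(x, y) = red s(f x, f y))
    (h : (colorGraph col T).Connected) : (colorGraph red T).Connected := by
  refine (connected_iff _).mpr ⟨fun q q' => ?_, h.nonempty.map f⟩
  obtain ⟨x, rfl⟩ := hf q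
  obtain ⟨y, rfl⟩ := hf q'
  exact reachable_colorGraph_map hcross (h x y)

lemma mem_usedColors_fiberColoring {x y : V} (hxy : x ≠ y) (hf : f x = f y) :
    col s(x, y) ∈ usedColors (fiberColoring col f (f x)) :=
  ⟨s(⟨x, rfl⟩, ⟨y, hf.symm⟩), by simpa using hxy, rfl⟩

lemma mem_triangleColors_fiberColoring {c : α} {x y z : V} (hxy : x ≠ y) (hxz : x ≠ z)
    (hyz : y ≠ z) (h₁ : col s(x, y) = c) (h₂ : col s(x, z) = c) (h₃ : col s(y, z) = c)
    (hfy : f x = f y) (hfz : f x = f z) : c ∈ triangleColors (fiberColoring col f (f x)) :=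
  ⟨⟨x, rfl⟩, ⟨y, hfy.symm⟩, ⟨z, hfz.symm⟩, by simpa using hxy, by simpa using hxz,
    by simpa using hyz, h₁, h₂, h₃⟩

lemma ncard_usedColors_add_ncard_triangleColors_le_sum [Finite V] [Fintype Q]
    (hcross : ∀ x y, f x ≠ f y → col s(x, y) = red s(f x, f y)) :
    (usedColors col).ncard + (triangleColors col).ncard ≤
      ∑ q, ((usedColors (fiberColoring col f q)).ncard +
        (triangleColors (fiberColoring col f q)).ncard) +
      ((usedColors red).ncard + (triangleColors red).ncard) := by
  set U := ⋃ q, usedColors (fiberColoring col f q)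
  set R := ⋃ q, triangleColors (fiberColoring col f q)
  have hfU : ∀ {x y}, x ≠ y → col s(x, y) ∉ U → f x ≠ f y := fun hxy hU hf =>
    hU (Set.mem_iUnion_of_mem _ (mem_usedColors_fiberColoring hxy hf))
  have hA : usedColors col \ U ⊆ usedColors red := by
    rintro c ⟨⟨e, he, rfl⟩, hcU⟩
    induction e with
    | _ x y =>
      have hfxy := hfU (fun h => he (Sym2.mk_isDiag_iff.mpr h)) hcU
      exact hcross x y hfxy ▸ mk_mem_usedColors hfxy
  have hB : triangleColors col \ R ⊆ usedColors red := by
    rintro c ⟨⟨x, y, z, hxy, hxz, hyz, rfl, h₂, h₃⟩, hcR⟩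
    by_cases hfxy : f x = f y
    · by_cases hfxz : f x = f z
      · exact (hcR (Set.mem_iUnion_of_mem (f x)
          (mem_triangleColors_fiberColoring hxy hxz hyz rfl h₂ h₃ hfxy hfxz))).elim
      · exact h₂ ▸ hcross x z hfxz ▸ mk_mem_usedColors hfxz
    · exact hcross x y hfxy ▸ mk_mem_usedColors hfxy
  have hAB : (usedColors col \ U) ∩ (triangleColors col \ R) ⊆ triangleColors red := by
    rintro c ⟨⟨-, hcU⟩, ⟨x, y, z, hxy, hxz, hyz, h₁, h₂, h₃⟩, -⟩
    have hf₁ := hfU hxy (h₁ ▸ hcU)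
    have hf₂ := hfU hxz (h₂ ▸ hcU)
    have hf₃ := hfU hyz (h₃ ▸ hcU)
    exact ⟨f x, f y, f z, hf₁, hf₂, hf₃, hcross x y hf₁ ▸ h₁, hcross x z hf₂ ▸ h₂,
      hcross y z hf₃ ▸ h₃⟩
  have hU := Set.ncard_le_ncard_sdiff_add_ncard (usedColors col) U
    (Set.finite_iUnion fun _ => usedColors_finite)
  have hR := Set.ncard_le_ncard_sdiff_add_ncard (triangleColors col) R
    (Set.finite_iUnion fun _ => triangleColors_finite)
  have hAB' := Set.ncard_union_add_ncard_inter (usedColors col \ U) (triangleColors col \ R)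
    (usedColors_finite.subset Set.sdiff_subset) (triangleColors_finite.subset Set.sdiff_subset)
  have hred₁ := Set.ncard_le_ncard (Set.union_subset hA hB) usedColors_finite
  have hred₂ := Set.ncard_le_ncard hAB triangleColors_finite
  have hsumU : U.ncard ≤ _ := Set.ncard_iUnion_le_of_fintype _
  have hsumR : R.ncard ≤ _ := Set.ncard_iUnion_le_of_fintype _
  rw [Finset.sum_add_distrib]
  omega

end Quotient

section Spanning

variable {col : Sym2 Q → α}

lemma not_cliqueFree_colorGraph {c : α} (hc : c ∈ triangleColors col) :
    ¬ (colorGraph col {c}).CliqueFree 3 := by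
  classical
  obtain ⟨x, y, z, hxy, hxz, hyz, h₁, h₂, h₃⟩ := hc
  exact fun hfree => hfree {x, y, z} (is3Clique_triple_iff.mpr (by simp_all))

open Classical in
lemma card_sub_one_add_ite_le_card_edgeSet [Finite Q] {c : α}
    (hc : (colorGraph col {c}).Connected) :
    Nat.card Q - 1 + (if c ∈ triangleColors col then 1 else 0) ≤
      Nat.card (colorGraph col {c}).edgeSet := by
  split_ifs with hct
  · have := hc.card_vert_le_card_edgeSet_of_not_cliqueFree (not_cliqueFree_colorGraph hct)
    have := hc.nonempty
    have := Nat.card_pos (α := Q)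
    omega
  · have := hc.card_vert_le_card_edgeSet_add_one
    omega

lemma ncard_usedColors_mul_add_ncard_triangleColors_le [Fintype Q]
    (hconn : ∀ c ∈ usedColors col, (colorGraph col {c}).Connected) :
    (usedColors col).ncard * (Fintype.card Q - 1) + (triangleColors col).ncard ≤
      (Fintype.card Q).choose 2 := by
  classical
  set D := (⊤ : SimpleGraph Q).edgeFinset
  have hused : usedColors col = ↑(D.image col) := by ext; simp [usedColors, D]
  have htri : (triangleColors col).ncard = #{c ∈ D.image col | c ∈ triangleColors col} := by
    rw [← Set.ncard_coe_finset, Finset.coe_filter]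
    congr 1
    ext c
    simp only [Set.mem_ofPred_eq, ← Finset.mem_coe, ← hused]
    exact ⟨fun h => ⟨triangleColors_subset_usedColors h, h⟩, And.right⟩
  have hedges : ∀ c, Nat.card (colorGraph col {c}).edgeSet = #{e ∈ D | col e = c} := by
    intro c
    rw [← Set.ncard_coe_finset, ← Nat.card_coe_set_eq]
    congr 2
    ext e
    simp [colorGraph, D, and_comm]
  calc (usedColors col).ncard * (Fintype.card Q - 1) + (triangleColors col).ncard
      = ∑ c ∈ D.image col, (Fintype.card Q - 1 + if c ∈ triangleColors col then 1 else 0) := by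
        rw [Finset.sum_add_distrib, Finset.sum_const, Finset.sum_boole, hused,
          Set.ncard_coe_finset, htri, smul_eq_mul, Nat.cast_id]
    _ ≤ ∑ c ∈ D.image col, #{e ∈ D | col e = c} := Finset.sum_le_sum fun c hc => by
        rw [← hedges, ← Nat.card_eq_fintype_card]
        exact card_sub_one_add_ite_le_card_edgeSet (hconn c (hused ▸ hc))
    _ = (Fintype.card Q).choose 2 := by
        rw [← Finset.card_eq_sum_card_image, card_edgeFinset_top_eq_card_choose_two]

lemma ncard_usedColors_add_ncard_triangleColors_lt_of_connected [Finite Q] [Nonempty Q]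
    (hconn : ∀ c ∈ usedColors col, (colorGraph col {c}).Connected) :
    (usedColors col).ncard + (triangleColors col).ncard < Nat.card Q := by
  have := Fintype.ofFinite Q
  rcases subsingleton_or_nontrivial Q with hQ | hQ
  · rw [ncard_usedColors_add_ncard_triangleColors_of_subsingleton]
    exact Nat.card_pos
  · have hρc :=
      Set.ncard_le_ncard triangleColors_subset_usedColors (usedColors_finite (col := col))
    have hsum := ncard_usedColors_mul_add_ncard_triangleColors_le hconn
    rw [Nat.choose_two_right] at hsum
    have := Nat.div_mul_le_self (Fintype.card Q * (Fintype.card Q - 1)) 2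
    have hk : 1 < Fintype.card Q := Fintype.one_lt_card
    obtain ⟨m, hm⟩ : ∃ m, Fintype.card Q = m + 1 := ⟨_, (Nat.sub_add_cancel hk.le).symm⟩
    rw [Nat.card_eq_fintype_card, hm]
    rw [hm, Nat.add_sub_cancel] at hsum this
    nlinarith

end Spanning

section Induction

variable {col : Sym2 V → α}

lemma IsGallai.ncard_usedColors_add_ncard_triangleColors_lt_of_fiberColoring [Finite V]
    [Nontrivial V] (h : IsGallai col)
    (hfib : ∀ q, (usedColors (fiberColoring col
      (colorGraph col (spanningColors col)ᶜ).connectedComponentMk q)).ncard +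
      (triangleColors (fiberColoring col
        (colorGraph col (spanningColors col)ᶜ).connectedComponentMk q)).ncard <
      Nat.card {v // (colorGraph col (spanningColors col)ᶜ).connectedComponentMk v = q}) :
    (usedColors col).ncard + (triangleColors col).ncard < Nat.card V := by
  set T := (spanningColors col)ᶜ
  set f := (colorGraph col T).connectedComponentMk
  have := Fintype.ofFinite (colorGraph col T).ConnectedComponent
  have := h.nontrivial_connectedComponent
  have hf : Surjective f := Quot.mk_surjective
  have hcross : ∀ x y, f x ≠ f y → col s(x, y) = reducedColoring col T s(f x, f y) :=
    fun _ _ => h.col_eq_reducedColoring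
  have hred := ncard_usedColors_add_ncard_triangleColors_lt_of_connected
    (col := reducedColoring col T) fun c hc => by
      have hc' : c ∈ spanningColors col := by
        simpa only [T, compl_compl] using usedColors_reducedColoring_subset hc
      exact connected_colorGraph_of_surjective hf hcross hc'
  have hsum : ∑ q, Nat.card {v // f v = q} = Nat.card V := by
    rw [← Nat.card_sigma, Nat.card_congr (Equiv.sigmaFiberEquiv f)]
  have hfib' := Finset.sum_le_sum fun q (_ : q ∈ Finset.univ) =>
    Nat.lt_iff_add_one_le.mp (hfib q)
  rw [Finset.sum_add_distrib, Finset.sum_const, Finset.card_univ, smul_eq_mul, mul_one,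
    ← Nat.card_eq_fintype_card] at hfib'
  have := ncard_usedColors_add_ncard_triangleColors_le_sum hcross
  omega

theorem IsGallai.ncard_usedColors_add_ncard_triangleColors_lt [Finite V] [Nonempty V]
    (h : IsGallai col) : (usedColors col).ncard + (triangleColors col).ncard < Nat.card V := by
  obtain ⟨n, hn⟩ : ∃ n, Nat.card V = n := ⟨_, rfl⟩
  induction n using Nat.strong_induction_on generalizing V with
  | _ n ih =>
    rcases subsingleton_or_nontrivial V with hV | hV
    · rw [ncard_usedColors_add_ncard_triangleColors_of_subsingleton]
      exact Nat.card_pos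
    · refine h.ncard_usedColors_add_ncard_triangleColors_lt_of_fiberColoring fun q => ?_
      have := h.nontrivial_connectedComponent
      obtain ⟨q', hq'⟩ := exists_ne q
      obtain ⟨x, rfl⟩ := Quot.mk_surjective q
      obtain ⟨y, rfl⟩ := Quot.mk_surjective q'
      exact @ih _ (hn ▸ Finite.card_subtype_lt (x := y) hq') _ _ _ ⟨⟨x, rfl⟩⟩
        (h.comp_sym2Map Subtype.val_injective) rfl

end Induction

end EdgeColoring

theorem gallai_colors_add_rho_general (V : Type*) [Fintype V]
    (hV : Nonempty V) (col : Sym2 V → ℕ)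
    (hrb : ∀ x y z : V, x ≠ y → x ≠ z → y ≠ z →
      ¬ (col s(x, y) ≠ col s(x, z) ∧ col s(x, y) ≠ col s(y, z) ∧
         col s(x, z) ≠ col s(y, z))) :
    (col '' {e : Sym2 V | ¬ e.IsDiag}).ncard +
      {lam : ℕ | ∃ x y z : V, x ≠ y ∧ x ≠ z ∧ y ≠ z ∧
        col s(x, y) = lam ∧ col s(x, z) = lam ∧ col s(y, z) = lam}.ncard ≤
      Fintype.card V - 1 := by
  have hgallai : EdgeColoring.IsGallai col := fun x y z hxy hxz hyz => by
    have := hrb x y z hxy hxz hyz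
    tauto
  have := hgallai.ncard_usedColors_add_ncard_triangleColors_lt
  rw [Nat.card_eq_fintype_card] at this
  exact Nat.le_sub_one_of_lt this

/-- Gallai-coloring lemma with monochromatic-triangle colors: if an
edge-coloring of a complete graph on a finite nonempty vertex set has no
rainbow triangle, then the number of colors used plus the number of colors
containing a monochromatic triangle is at most `|V| - 1`. -/
theorem gallai_colors_add_rho (V : Type*) [Fintype V] [DecidableEq V]
    (hV : Nonempty V) (col : Sym2 V → ℕ)
    (hrb : ∀ x y z : V, x ≠ y → x ≠ z → y ≠ z →
      ¬ (col s(x, y) ≠ col s(x, z) ∧ col s(x, y) ≠ col s(y, z) ∧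
         col s(x, z) ≠ col s(y, z))) :
    (col '' {e : Sym2 V | ¬ e.IsDiag}).ncard +
      {lam : ℕ | ∃ x y z : V, x ≠ y ∧ x ≠ z ∧ y ≠ z ∧
        col s(x, y) = lam ∧ col s(x, z) = lam ∧ col s(y, z) = lam}.ncard ≤
      Fintype.card V - 1 :=
  gallai_colors_add_rho_general V hV col hrb
end
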